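/- Projective measurement increases quantum f-entropy: for a complete family of orthogonal projectors {P_i} with Σ_i P_i = I and strictly positive ρ with Σ_i P_i ρ P_i strictly positive, S_f(Σ_i P_i ρ P_i) ≥ S_f(ρ). -/

import Mathlib

/-!
With `g t = t * f t⁻¹`, the entropy is `S_f(ρ) = -∑ₖ g(λₖ)` over the eigenvalues `λ` of `ρ`.
Restricting operator convexity to scalar matrices shows that `f` is convex, hence so is its
perspective-type transform `g`. Written in the eigenbases `u` of `ρ` and `v` of the pinched state,
the pinching sends the eigenvalues `λ` to `D λ`, where `D j k = ∑ᵢ |⟪v j, Pᵢ u k⟫|²` is doubly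
stochastic because `∑ᵢ Pᵢ = ∑ᵢ Pᵢ² = 1`. Jensen's inequality along each row of `D`, summed
using the column sums, gives `∑ⱼ g((D λ)ⱼ) ≤ ∑ₖ g(λₖ)`.
-/

open Matrix Kronecker
open scoped ComplexOrder

noncomputable def applyFun {n : Type*} [Fintype n] [DecidableEq n]
    (f : ℝ → ℝ) (A : Matrix n n ℂ) : Matrix n n ℂ := by
  classical exact
    if hA : A.IsHermitian then
      (hA.eigenvectorUnitary : Matrix n n ℂ) *
        Matrix.diagonal (fun i => (f (hA.eigenvalues i) : ℂ)) *
        (star (hA.eigenvectorUnitary : Matrix n n ℂ))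
    else 0

noncomputable def msqrt {n : Type*} [Fintype n] [DecidableEq n]
    (A : Matrix n n ℂ) : Matrix n n ℂ := by
  classical exact if h : A.PosSemidef then
    (h.1.eigenvectorUnitary : Matrix n n ℂ) *
      Matrix.diagonal ((↑) ∘ (Real.sqrt ·) ∘ h.1.eigenvalues) *
      (star h.1.eigenvectorUnitary : Matrix n n ℂ) else 0

def vecOf {m n : Type*} (A : Matrix m n ℂ) : m × n → ℂ := fun p => A p.1 p.2

noncomputable def Srel {n : Type*} [Fintype n] [DecidableEq n]
    (f : ℝ → ℝ) (ρ σ : Matrix n n ℂ) : ℝ :=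
  (star (vecOf (msqrt ρ)) ⬝ᵥ (applyFun f (σ ⊗ₖ (ρ⁻¹)ᵀ) *ᵥ vecOf (msqrt ρ))).re

def OperatorConvexOn (I : Set ℝ) (f : ℝ → ℝ) : Prop :=
  ∀ (n : ℕ) (A B : Matrix (Fin n) (Fin n) ℂ) (hA : A.IsHermitian) (hB : B.IsHermitian),
    (∀ i, hA.eigenvalues i ∈ I) → (∀ i, hB.eigenvalues i ∈ I) →
    ∀ lam : ℝ, 0 ≤ lam → lam ≤ 1 →
      ((lam : ℂ) • applyFun f A + ((1 - lam : ℝ) : ℂ) • applyFun f B -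
        applyFun f ((lam : ℂ) • A + ((1 - lam : ℝ) : ℂ) • B)).PosSemidef

noncomputable def entf {n : Type*} [Fintype n] [DecidableEq n]
    (f : ℝ → ℝ) (ρ : Matrix n n ℂ) : ℝ :=
  -(Matrix.trace (ρ * applyFun f ρ⁻¹)).re

noncomputable def ptraceB {α β : Type*} [Fintype β]
    (M : Matrix (α × β) (α × β) ℂ) : Matrix α α ℂ :=
  Matrix.of fun i j => ∑ k, M (i, k) (j, k)

noncomputable def ptraceA {α β : Type*} [Fintype α]
    (M : Matrix (α × β) (α × β) ℂ) : Matrix β β ℂ :=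
  Matrix.of fun i j => ∑ k, M (k, i) (k, j)

def NonAffineOn (I : Set ℝ) (f : ℝ → ℝ) : Prop :=
  ¬ ∃ c b : ℝ, ∀ t ∈ I, f t = c * t + b

lemma applyFun_eq_cfc {n : Type*} [Fintype n] [DecidableEq n] (f : ℝ → ℝ) {A : Matrix n n ℂ}
    (hA : A.IsHermitian) : applyFun f A = cfc f A := by
  rw [hA.cfc_eq, applyFun, dif_pos hA]
  rfl

lemma Matrix.IsHermitian.trace_cfc {n : Type*} [Fintype n] [DecidableEq n] {A : Matrix n n ℂ}
    (hA : A.IsHermitian) (f : ℝ → ℝ) : (cfc f A).trace = ∑ i, (f (hA.eigenvalues i) : ℂ) := by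
  rw [hA.cfc_eq, IsHermitian.cfc, Unitary.conjStarAlgAut_apply, trace_mul_cycle,
    Unitary.coe_star_mul_self, one_mul, trace_diagonal]
  rfl

lemma Matrix.PosDef.inv_eq_cfc {n : Type*} [Fintype n] [DecidableEq n] {A : Matrix n n ℂ}
    (hA : A.PosDef) : A⁻¹ = cfc (·⁻¹ : ℝ → ℝ) A := by
  rw [cfc_ringInverse_id A hA.isUnit hA.1.isSelfAdjoint, nonsing_inv_eq_ringInverse]

lemma entf_eq_neg_sum_eigenvalues {n : Type*} [Fintype n] [DecidableEq n] (f : ℝ → ℝ)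
    {A : Matrix n n ℂ} (hA : A.PosDef) :
    entf f A = -∑ i, hA.1.eigenvalues i * f (hA.1.eigenvalues i)⁻¹ := by
  have hfin : (spectrum ℝ A).Finite := A.finite_real_spectrum
  have hmul : A * applyFun f A⁻¹ = cfc (fun x => x * f x⁻¹) A := by
    rw [applyFun_eq_cfc f hA.inv.1, hA.inv_eq_cfc,
      ← cfc_comp' f (·⁻¹) A ((hfin.image _).continuousOn f) (hfin.continuousOn _)
        hA.1.isSelfAdjoint,
      cfc_mul _ _ A (hfin.continuousOn _) (hfin.continuousOn _), cfc_id' ℝ A hA.1.isSelfAdjoint]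
  rw [entf, hmul, hA.1.trace_cfc, ← Complex.ofReal_sum, Complex.ofReal_re]

lemma Matrix.IsHermitian.eigenvalues_algebraMap {n : Type*} [Fintype n] [DecidableEq n] {c : ℝ}
    (hA : (algebraMap ℝ (Matrix n n ℂ) c).IsHermitian) (i : n) : hA.eigenvalues i = c := by
  have : Nonempty n := ⟨i⟩
  simpa [spectrum.scalar_eq] using hA.eigenvalues_mem_spectrum_real i

lemma applyFun_algebraMap {n : Type*} [Fintype n] [DecidableEq n] (f : ℝ → ℝ) (c : ℝ) :
    applyFun f (algebraMap ℝ (Matrix n n ℂ) c) = algebraMap ℝ (Matrix n n ℂ) (f c) := by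
  rw [applyFun_eq_cfc f (IsSelfAdjoint.algebraMap (Matrix n n ℂ) (.all c) :), cfc_algebraMap]

lemma OperatorConvexOn.convexOn {I : Set ℝ} {f : ℝ → ℝ} (hf : OperatorConvexOn I f)
    (hI : Convex ℝ I) : ConvexOn ℝ I f := by
  refine ⟨hI, fun x hx y hy a b ha hb hab => ?_⟩
  obtain rfl : b = 1 - a := by linarith
  let S (c : ℝ) : Matrix (Fin 1) (Fin 1) ℂ := algebraMap ℝ _ c
  have hS (c : ℝ) : (S c).IsHermitian := isHermitian_iff_isSelfAdjoint.mpr (.algebraMap _ (.all c))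
  have hcomb (u v : ℝ) : (a : ℂ) • S u + ((1 - a : ℝ) : ℂ) • S v = S (a * u + (1 - a) * v) := by
    ext i j
    simp [S, algebraMap_matrix_apply]
    split_ifs <;> ring
  have key := hf 1 (S x) (S y) (hS x) (hS y) (by simpa [(hS x).eigenvalues_algebraMap] using hx)
    (by simpa [(hS y).eigenvalues_algebraMap] using hy) a ha (by linarith)
  rw [applyFun_algebraMap, applyFun_algebraMap, hcomb, hcomb, applyFun_algebraMap,
    ← map_sub] at key
  have hnonneg := key.eigenvalues_nonneg 0
  rw [key.1.eigenvalues_algebraMap] at hnonneg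
  simp only [smul_eq_mul]
  linarith

lemma ConvexOn.mul_comp_inv {f : ℝ → ℝ} (hf : ConvexOn ℝ (Set.Ioi 0) f) :
    ConvexOn ℝ (Set.Ioi 0) (fun t => t * f t⁻¹) := by
  refine ⟨convex_Ioi 0, fun x hx y hy a b ha hb hab => ?_⟩
  simp only [smul_eq_mul]
  rcases ha.eq_or_lt with rfl | ha
  · simp [show b = 1 by linarith]
  rcases hb.eq_or_lt with rfl | hb
  · simp [show a = 1 by linarith]
  have hx : 0 < x := hx
  have hy : 0 < y := hy
  set t := a * x + b * y
  have htpos : 0 < t := by positivity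
  -- `t⁻¹` is the convex combination of `x⁻¹` and `y⁻¹` with weights `a x / t` and `b y / t`.
  have hweights : a * x / t + b * y / t = 1 := by rw [← add_div, div_self htpos.ne']
  have hinv : (a * x / t) • x⁻¹ + (b * y / t) • y⁻¹ = t⁻¹ := by
    rw [smul_eq_mul, smul_eq_mul]
    field_simp
    exact hab
  have hjensen := hf.2 (inv_pos.mpr hx) (inv_pos.mpr hy) (by positivity) (by positivity) hweights
  rw [hinv, smul_eq_mul, smul_eq_mul] at hjensen
  calc t * f t⁻¹ ≤ t * (a * x / t * f x⁻¹ + b * y / t * f y⁻¹) := by gcongr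
    _ = a * (x * f x⁻¹) + b * (y * f y⁻¹) := by field_simp

lemma ConvexOn.sum_comp_mulVec_le {n : Type*} [Fintype n] [DecidableEq n] {s : Set ℝ}
    {g : ℝ → ℝ} (hg : ConvexOn ℝ s g) {D : Matrix n n ℝ} (hD : D ∈ doublyStochastic ℝ n)
    {a : n → ℝ} (ha : ∀ k, a k ∈ s) : ∑ j, g ((D *ᵥ a) j) ≤ ∑ k, g (a k) :=
  calc ∑ j, g ((D *ᵥ a) j) ≤ ∑ j, ∑ k, D j k * g (a k) := Finset.sum_le_sum fun j _ => by
        simpa [mulVec, dotProduct] using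
          hg.map_sum_le (fun k _ => nonneg_of_mem_doublyStochastic hD)
            (sum_row_of_mem_doublyStochastic hD j) (fun k _ => ha k)
    _ = ∑ k, g (a k) := by
        rw [Finset.sum_comm]
        simp [← Finset.sum_mul, sum_col_of_mem_doublyStochastic hD]

lemma Matrix.mul_diagonal_mul_star_apply_self {n : Type*} [Fintype n] [DecidableEq n]
    (N : Matrix n n ℂ) (a : n → ℝ) (j : n) :
    (N * diagonal (fun k => (a k : ℂ)) * star N) j j =
      ((∑ k, Complex.normSq (N j k) * a k : ℝ) : ℂ) := by
  rw [mul_apply]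
  push_cast
  refine Finset.sum_congr rfl fun k _ => ?_
  rw [mul_diagonal, star_apply, Complex.star_def, mul_right_comm, Complex.mul_conj]

lemma Matrix.mul_star_apply_self {n : Type*} [Fintype n] [DecidableEq n]
    (N : Matrix n n ℂ) (j : n) : (N * star N) j j = ((∑ k, Complex.normSq (N j k) : ℝ) : ℂ) := by
  simpa using N.mul_diagonal_mul_star_apply_self 1 j

lemma Matrix.star_mul_apply_self {n : Type*} [Fintype n] [DecidableEq n]
    (N : Matrix n n ℂ) (k : n) : (star N * N) k k = ((∑ j, Complex.normSq (N j k) : ℝ) : ℂ) := by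
  simpa using (star N).mul_star_apply_self k

lemma Matrix.of_sum_normSq_mem_doublyStochastic {ι n : Type*} [Fintype ι] [Fintype n]
    [DecidableEq n] (M : ι → Matrix n n ℂ) (h₁ : ∑ i, M i * star (M i) = 1)
    (h₂ : ∑ i, star (M i) * M i = 1) :
    of (fun j k => ∑ i, Complex.normSq (M i j k)) ∈ doublyStochastic ℝ n := by
  refine mem_doublyStochastic_iff_sum.mpr ⟨fun j k => ?_, fun j => ?_, fun k => ?_⟩
  · exact Finset.sum_nonneg fun i _ => Complex.normSq_nonneg _
  · have hjj := congr($h₁ j j)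
    simp only [Matrix.sum_apply, mul_star_apply_self, one_apply_eq] at hjj
    simp only [of_apply]
    rw [Finset.sum_comm]
    exact_mod_cast hjj
  · have hkk := congr($h₂ k k)
    simp only [Matrix.sum_apply, star_mul_apply_self, one_apply_eq] at hkk
    simp only [of_apply]
    rw [Finset.sum_comm]
    exact_mod_cast hkk

theorem exists_mem_doublyStochastic_mulVec_eq {ι n : Type*} [Fintype ι] [Fintype n]
    [DecidableEq n] (K : ι → Matrix n n ℂ) (hK₁ : ∑ i, K i * star (K i) = 1)
    (hK₂ : ∑ i, star (K i) * K i = 1) {U V : Matrix n n ℂ} (hU : U ∈ unitaryGroup n ℂ)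
    (hV : V ∈ unitaryGroup n ℂ) (a b : n → ℝ)
    (h : ∑ i, K i * (U * diagonal (fun k => (a k : ℂ)) * star U) * star (K i) =
      V * diagonal (fun k => (b k : ℂ)) * star V) :
    ∃ D ∈ doublyStochastic ℝ n, D *ᵥ a = b := by
  let M (i : ι) : Matrix n n ℂ := star V * K i * U
  have hM₁ : ∑ i, M i * star (M i) = 1 :=
    calc ∑ i, M i * star (M i) = star V * (∑ i, K i * star (K i)) * V := by
          simp [M, Finset.mul_sum, Finset.sum_mul, Matrix.mul_assoc,
            ← Matrix.mul_assoc U, Unitary.mul_star_self_of_mem hU]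
      _ = 1 := by rw [hK₁, Matrix.mul_one, Unitary.star_mul_self_of_mem hV]
  have hM₂ : ∑ i, star (M i) * M i = 1 :=
    calc ∑ i, star (M i) * M i = star U * (∑ i, star (K i) * K i) * U := by
          simp [M, Finset.mul_sum, Finset.sum_mul, Matrix.mul_assoc,
            ← Matrix.mul_assoc V, Unitary.mul_star_self_of_mem hV]
      _ = 1 := by rw [hK₂, Matrix.mul_one, Unitary.star_mul_self_of_mem hU]
  have hMab : ∑ i, M i * diagonal (fun k => (a k : ℂ)) * star (M i) =
      diagonal (fun k => (b k : ℂ)) :=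
    calc _ = star V * (∑ i, K i * (U * diagonal (fun k => (a k : ℂ)) * star U) * star (K i)) *
          V := by
          simp [M, Finset.mul_sum, Finset.sum_mul, Matrix.mul_assoc]
      _ = _ := by
          rw [h, ← Matrix.mul_assoc, ← Matrix.mul_assoc, Unitary.star_mul_self_of_mem hV,
            Matrix.one_mul, Matrix.mul_assoc, Unitary.star_mul_self_of_mem hV, Matrix.mul_one]
  refine ⟨_, of_sum_normSq_mem_doublyStochastic M hM₁ hM₂, funext fun j => ?_⟩
  have hjj := congr($hMab j j)
  simp only [Matrix.sum_apply, mul_diagonal_mul_star_apply_self, diagonal_apply_eq] at hjj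
  simp only [mulVec, dotProduct, of_apply, Finset.sum_mul]
  rw [Finset.sum_comm]
  exact_mod_cast hjj

lemma Matrix.IsHermitian.eq_eigenvectorUnitary_mul_diagonal {n : Type*} [Fintype n]
    [DecidableEq n] {A : Matrix n n ℂ} (hA : A.IsHermitian) :
    A = (hA.eigenvectorUnitary : Matrix n n ℂ) * diagonal (fun k => (hA.eigenvalues k : ℂ)) *
      star (hA.eigenvectorUnitary : Matrix n n ℂ) := by
  conv_lhs => rw [hA.spectral_theorem, Unitary.conjStarAlgAut_apply]
  rfl

theorem entf_pinching_le_general {d m : ℕ} (f : ℝ → ℝ)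
    (hf : OperatorConvexOn (Set.Ioi 0) f)
    (P : Fin m → Matrix (Fin d) (Fin d) ℂ)
    (hHerm : ∀ i, (P i).IsHermitian) (hIdem : ∀ i, P i * P i = P i)
    (hSum : ∑ i, P i = 1)
    (ρ : Matrix (Fin d) (Fin d) ℂ) (hρ : ρ.PosDef)
    (hpinch : (∑ i, P i * ρ * P i).PosDef) :
    entf f ρ ≤ entf f (∑ i, P i * ρ * P i) := by
  have hg := (hf.convexOn (convex_Ioi 0)).mul_comp_inv
  have hstar (i : Fin m) : star (P i) = P i := hHerm i
  have hK : ∑ i, P i * star (P i) = 1 := by simp only [hstar, hIdem, hSum]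
  have hK' : ∑ i, star (P i) * P i = 1 := by simp only [hstar, hIdem, hSum]
  obtain ⟨D, hD, hDa⟩ := exists_mem_doublyStochastic_mulVec_eq P hK hK'
    hρ.1.eigenvectorUnitary.2 hpinch.1.eigenvectorUnitary.2 hρ.1.eigenvalues
    hpinch.1.eigenvalues (by
      rw [← hρ.1.eq_eigenvectorUnitary_mul_diagonal,
        ← hpinch.1.eq_eigenvectorUnitary_mul_diagonal]
      simp only [hstar])
  rw [entf_eq_neg_sum_eigenvalues f hρ, entf_eq_neg_sum_eigenvalues f hpinch, neg_le_neg_iff,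
    ← hDa]
  exact hg.sum_comp_mulVec_le hD hρ.eigenvalues_pos

/-- projective measurement increases quantum f-entropy. -/
theorem entf_pinching_le {d m : ℕ} (f : ℝ → ℝ)
    (hf : OperatorConvexOn (Set.Ioi 0) f)
    (P : Fin m → Matrix (Fin d) (Fin d) ℂ)
    (hHerm : ∀ i, (P i).IsHermitian) (hIdem : ∀ i, P i * P i = P i)
    (hOrth : ∀ i j, i ≠ j → P i * P j = 0) (hSum : ∑ i, P i = 1)
    (ρ : Matrix (Fin d) (Fin d) ℂ) (hρ : ρ.PosDef)
    (hpinch : (∑ i, P i * ρ * P i).PosDef) :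
    entf f ρ ≤ entf f (∑ i, P i * ρ * P i) :=
  entf_pinching_le_general f hf P hHerm hIdem hSum ρ hρ hpinch
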